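/- arXiv:2510.27098 — 3 statements merged into one kernel-verified Lean document; each statement's English description precedes it below -/
import Mathlib

section
/- If $f\in C^1[0,\infty)\cap C^2(0,\infty)$ with $f'(u)>0$, $f''(u)>0$ for $u>0$, and the limit $q_f=\lim_{u\to\infty} f'(u)^2/(f(u)f''(u))$ exists, then the growth rate $p_f=\lim_{u\to\infty} uf'(u)/f(u)$ exists and satisfies $1/p_f+1/q_f=1$ (interpreting $1/p_f=0$ when $q_f=1$). -/
/-!
Put `h = f / f'`. Then `h' = 1 - f f'' / f'^2 → 1 - 1/q`, so `h u / u → 1 - 1/q` as well, and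
`u f'(u) / f(u)` is the reciprocal of `h u / u`.
-/

open Real Filter Set Topology Asymptotics

theorem isLittleO_id_of_tendsto_deriv_zero {g : ℝ → ℝ}
    (hdiff : ∀ᶠ x in atTop, DifferentiableAt ℝ g x) (hd : Tendsto (deriv g) atTop (𝓝 0)) :
    g =o[atTop] id := by
  refine IsLittleO.of_bound fun ε hε => ?_
  have hsmall : ∀ᶠ x in atTop, ‖deriv g x‖ ≤ ε / 2 :=
    hd.norm.eventually (ge_mem_nhds (by simpa using half_pos hε))
  obtain ⟨U, hU⟩ := eventually_atTop.1 ((eventually_ge_atTop 0).and (hdiff.and hsmall))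
  have hU0 : 0 ≤ U := (hU U le_rfl).1
  have hmvt : ∀ u ≥ U, ‖g u - g U‖ ≤ ε / 2 * ‖u‖ := by
    intro u hu
    calc ‖g u - g U‖ ≤ ε / 2 * ‖u - U‖ :=
          (convex_Ici U).norm_image_sub_le_of_norm_deriv_le (fun x hx => (hU x hx).2.1)
            (fun x hx => (hU x hx).2.2) (mem_Ici.2 le_rfl) hu
      _ ≤ ε / 2 * ‖u‖ := by
          rw [Real.norm_of_nonneg (sub_nonneg.2 hu), Real.norm_of_nonneg (hU0.trans hu)]
          gcongr
          linarith
  filter_upwards [eventually_ge_atTop U, (isLittleO_const_id_atTop (g U)).def (half_pos hε)]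
    with u hu hconst
  calc ‖g u‖ ≤ ‖g u - g U‖ + ‖g U‖ := norm_le_norm_sub_add _ _
    _ ≤ ε * ‖id u‖ := by rw [id] at hconst ⊢; linarith [hmvt u hu]

theorem tendsto_div_id_of_tendsto_deriv {g : ℝ → ℝ} {c : ℝ}
    (hdiff : ∀ᶠ x in atTop, DifferentiableAt ℝ g x) (hd : Tendsto (deriv g) atTop (𝓝 c)) :
    Tendsto (fun u => g u / u) atTop (𝓝 c) := by
  have hG : ∀ᶠ x in atTop, HasDerivAt (fun u => g u - c * u) (deriv g x - c * 1) x :=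
    hdiff.mono fun x hx => hx.hasDerivAt.sub ((hasDerivAt_id' x).const_mul c)
  have hG' : Tendsto (deriv fun u => g u - c * u) atTop (𝓝 0) :=
    (sub_self c ▸ hd.sub_const c).congr' (hG.mono fun x hx => by rw [hx.deriv, mul_one])
  have h := (isLittleO_id_of_tendsto_deriv_zero (hG.mono fun x hx => hx.differentiableAt)
    hG').tendsto_div_nhds_zero.add_const c
  rw [zero_add] at h
  refine h.congr' ((eventually_ne_atTop 0).mono fun u hu => ?_)
  simp only [id]
  field_simp
  ring

theorem hasDerivAt_div_deriv {f : ℝ → ℝ} {u : ℝ} (hf : DifferentiableAt ℝ f u)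
    (hf' : DifferentiableAt ℝ (deriv f) u) (h0 : deriv f u ≠ 0) :
    HasDerivAt (fun x => f x / deriv f x) (1 - f u * deriv (deriv f) u / deriv f u ^ 2) u := by
  refine (hf.hasDerivAt.div hf'.hasDerivAt h0).congr_deriv ?_
  field_simp

section GrowthRate

variable {f : ℝ → ℝ} {q : ℝ} (hf' : ∀ᶠ u in atTop, 0 < deriv f u)
  (hf'' : ∀ᶠ u in atTop, 0 < deriv (deriv f) u)
  (hq : Tendsto (fun u => deriv f u ^ 2 / (f u * deriv (deriv f) u)) atTop (𝓝 q))
include hf' hf'' hq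

theorem tendsto_div_deriv_div_id (hq0 : q ≠ 0) :
    Tendsto (fun u => f u / deriv f u / u) atTop (𝓝 (1 - q⁻¹)) := by
  have hderiv : ∀ᶠ u in atTop, HasDerivAt (fun x => f x / deriv f x)
      (1 - (deriv f u ^ 2 / (f u * deriv (deriv f) u))⁻¹) u := by
    filter_upwards [hf', hf''] with u h1 h2
    rw [inv_div]
    exact hasDerivAt_div_deriv (differentiableAt_of_deriv_ne_zero h1.ne')
      (differentiableAt_of_deriv_ne_zero h2.ne') h1.ne'
  refine tendsto_div_id_of_tendsto_deriv (hderiv.mono fun u hu => hu.differentiableAt) ?_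
  exact ((hq.inv₀ hq0).const_sub 1).congr' (hderiv.mono fun u hu => hu.deriv.symm)

theorem eventually_pos_div_deriv_div_id (hq0 : 0 < q) :
    ∀ᶠ u in atTop, 0 < f u / deriv f u / u := by
  filter_upwards [hf', hf'', hq.eventually (lt_mem_nhds hq0), eventually_gt_atTop 0]
    with u h1 h2 hratio hu
  have hf : 0 < f u := by
    by_contra! hf
    exact (div_nonpos_of_nonneg_of_nonpos (sq_nonneg _) (mul_nonpos_of_nonpos_of_nonneg hf h2.le)
      ).not_gt hratio
  positivity

end GrowthRate

theorem stmt0_general (f : ℝ → ℝ) (q : ℝ)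
    (hf' : ∀ u > (0:ℝ), 0 < deriv f u) (hf'' : ∀ u > (0:ℝ), 0 < deriv (deriv f) u)
    (hq : Tendsto (fun u => (deriv f u) ^ 2 / (f u * deriv (deriv f) u)) atTop (𝓝 q)) :
    (q = 1 → Tendsto (fun u => u * deriv f u / f u) atTop atTop) ∧
    (1 < q → ∃ p : ℝ, 1 < p ∧
      Tendsto (fun u => u * deriv f u / f u) atTop (𝓝 p) ∧ 1 / p + 1 / q = 1) := by
  have hf'_ev := (eventually_gt_atTop 0).mono hf'
  have hf''_ev := (eventually_gt_atTop 0).mono hf''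
  have hlim := tendsto_div_deriv_div_id hf'_ev hf''_ev hq
  refine ⟨fun hq_eq => ?_, fun hq_gt => ?_⟩
  · subst hq_eq
    have hpos := eventually_pos_div_deriv_div_id hf'_ev hf''_ev hq one_pos
    have h0 := hlim one_ne_zero
    rw [inv_one, sub_self] at h0
    simpa only [Pi.inv_def, inv_div, div_div_eq_mul_div] using
      (tendsto_nhdsWithin_iff.2 ⟨h0, hpos⟩).inv_tendsto_nhdsGT_zero
  · have hq0 : 0 < q := zero_lt_one.trans hq_gt
    have hc : 0 < 1 - q⁻¹ := sub_pos.2 (inv_lt_one_of_one_lt₀ hq_gt)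
    refine ⟨(1 - q⁻¹)⁻¹, (one_lt_inv₀ hc).2 (sub_lt_self 1 (inv_pos.2 hq0)), ?_, ?_⟩
    · simpa only [inv_div, div_div_eq_mul_div] using (hlim hq0.ne').inv₀ hc.ne'
    · rw [one_div, one_div, inv_inv]
      ring

theorem stmt0 (f : ℝ → ℝ) (q : ℝ)
    (hf1 : ContDiffOn ℝ 1 f (Set.Ici 0)) (hf2 : ContDiffOn ℝ 2 f (Set.Ioi 0))
    (hf0 : f 0 = 0) (hf'0 : deriv f 0 = 0)
    (hf' : ∀ u > (0:ℝ), 0 < deriv f u) (hf'' : ∀ u > (0:ℝ), 0 < deriv (deriv f) u)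
    (hq1 : 1 ≤ q)
    (hq : Tendsto (fun u => (deriv f u) ^ 2 / (f u * deriv (deriv f) u)) atTop (𝓝 q)) :
    (q = 1 → Tendsto (fun u => u * deriv f u / f u) atTop atTop) ∧
    (1 < q → ∃ p : ℝ, 1 < p ∧
      Tendsto (fun u => u * deriv f u / f u) atTop (𝓝 p) ∧ 1 / p + 1 / q = 1) :=
  stmt0_general f q hf' hf'' hq
end

section
/- Suppose $f>0$, $f'>0$ on $[M,\infty)$, $F(u)=\int_u^\infty ds/f(s)$ is finite, and $f'(u)F(u)\leq Q$ for all $u\geq M$ where $Q>1$. Then for all $u\geq M$, $u \leq M + \frac{f(M)F(M)^{Q}}{Q-1}\big(F(u)^{1-Q} - F(M)^{1-Q}\big)$. -/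
/-!
Write `F u = ∫_u^∞ ds / f s`, so that `F' = -1/f`. Then `(f F^Q)' = F^(Q-1) (f' F - Q) ≤ 0`,
hence `f F^Q ≤ K := f M * F M ^ Q` on `[M, ∞)`. Consequently
`(F^(1-Q) / (Q-1))' = 1 / (f F^Q) ≥ 1 / K`, and integrating this from `M` to `u` gives the bound.
-/

open Real Filter Set Topology MeasureTheory

section TailIntegral

variable {g : ℝ → ℝ} {a : ℝ}

lemma integral_Ioi_pos (hg : IntegrableOn g (Ioi a)) (hpos : ∀ s ∈ Ioi a, 0 < g s) :
    0 < ∫ s in Ioi a, g s := by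
  have hsupp : Ioi a ⊆ Function.support g := fun s hs => (hpos s hs).ne'
  rw [setIntegral_pos_iff_support_of_nonneg_ae
    (ae_restrict_of_forall_mem measurableSet_Ioi fun s hs => (hpos s hs).le) hg,
    inter_eq_right.2 hsupp]
  simp

lemma hasDerivAt_integral_Ioi (hg : IntegrableOn g (Ioi a)) {u : ℝ} (hu : a < u)
    (hgu : ContinuousAt g u) : HasDerivAt (fun x => ∫ s in Ioi x, g s) (-g u) u := by
  have hmeas : StronglyMeasurableAtFilter g (𝓝 u) :=
    AEStronglyMeasurable.stronglyMeasurableAtFilter_of_mem hg.aestronglyMeasurable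
      (Ioi_mem_nhds hu)
  have hint : IntervalIntegrable g volume a u :=
    (intervalIntegrable_iff_integrableOn_Ioc_of_le hu.le).2 (hg.mono_set Ioc_subset_Ioi_self)
  refine ((intervalIntegral.integral_hasDerivAt_right hint hmeas hgu).const_sub
    (∫ s in Ioi a, g s)).congr_of_eventuallyEq ?_
  filter_upwards [Ici_mem_nhds hu] with x hx
  rw [← intervalIntegral.integral_Ioi_sub_Ioi hg hx, sub_sub_cancel]

end TailIntegral

section Comparison

variable {f F : ℝ → ℝ} {M Q : ℝ}

lemma antitoneOn_mul_rpow_of_hasDerivAt (hfc : ContinuousOn f (Ici M))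
    (hfd : ∀ x ∈ Ioi M, DifferentiableAt ℝ f x) (hFc : ContinuousOn F (Ici M))
    (hFd : ∀ x ∈ Ioi M, HasDerivAt F (-(1 / f x)) x) (hfpos : ∀ x ∈ Ioi M, 0 < f x)
    (hFpos : ∀ x ∈ Ici M, 0 < F x) (hb : ∀ x ∈ Ioi M, deriv f x * F x ≤ Q) :
    AntitoneOn (fun x => f x * F x ^ Q) (Ici M) := by
  refine antitoneOn_of_hasDerivWithinAt_nonpos (convex_Ici M)
    (f' := fun x => F x ^ (Q - 1) * (deriv f x * F x - Q))
    (hfc.mul (hFc.rpow_const fun x hx => Or.inl (hFpos x hx).ne'))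
    (fun x hx => ?_) (fun x hx => ?_)
    <;> rw [interior_Ici] at hx
  · have hFx := hFpos x (Ioi_subset_Ici_self hx)
    refine (((hfd x hx).hasDerivAt.mul ((hFd x hx).rpow_const (Or.inl hFx.ne'))).congr_deriv
      ?_).hasDerivWithinAt
    rw [rpow_sub_one hFx.ne']
    field_simp [(hfpos x hx).ne']
    ring
  · exact mul_nonpos_of_nonneg_of_nonpos (rpow_nonneg (hFpos x (Ioi_subset_Ici_self hx)).le _)
      (by linarith [hb x hx])

lemma sub_le_mul_rpow_sub_rpow_of_hasDerivAt (hFc : ContinuousOn F (Ici M))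
    (hFd : ∀ x ∈ Ioi M, HasDerivAt F (-(1 / f x)) x) (hfpos : ∀ x ∈ Ioi M, 0 < f x)
    (hFpos : ∀ x ∈ Ici M, 0 < F x) (hQ : Q ≠ 1) {K : ℝ} (hK : ∀ x ∈ Ioi M, f x * F x ^ Q ≤ K)
    {u : ℝ} (hu : M ≤ u) : u - M ≤ K / (Q - 1) * (F u ^ (1 - Q) - F M ^ (1 - Q)) := by
  have hQ' : Q - 1 ≠ 0 := sub_ne_zero.2 hQ
  have hmono : MonotoneOn (fun x => K / (Q - 1) * F x ^ (1 - Q) - x) (Ici M) := by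
    refine monotoneOn_of_hasDerivWithinAt_nonneg (convex_Ici M)
      (f' := fun x => K / (f x * F x ^ Q) - 1)
      ((continuousOn_const.mul (hFc.rpow_const fun x hx => Or.inl (hFpos x hx).ne')).sub
        continuousOn_id) (fun x hx => ?_) (fun x hx => ?_)
      <;> rw [interior_Ici] at hx
    · have hFx := hFpos x (Ioi_subset_Ici_self hx)
      refine ((((hFd x hx).rpow_const (Or.inl hFx.ne')).const_mul _).sub
        (hasDerivAt_id x)).congr_deriv ?_ |>.hasDerivWithinAt
      rw [show 1 - Q - 1 = -Q by ring, rpow_neg hFx.le]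
      field_simp [(hfpos x hx).ne']
      ring
    · have hprod : 0 < f x * F x ^ Q :=
        mul_pos (hfpos x hx) (rpow_pos_of_pos (hFpos x (Ioi_subset_Ici_self hx)) Q)
      exact sub_nonneg.2 ((one_le_div hprod).2 (hK x hx))
  have hMu := hmono self_mem_Ici hu hu
  simp only at hMu
  linarith [mul_sub (K / (Q - 1)) (F u ^ (1 - Q)) (F M ^ (1 - Q))]

end Comparison

theorem stmt7_general (M Q : ℝ) (hQ : 1 < Q) (f : ℝ → ℝ)
    (hf : ContDiffOn ℝ 1 f (Set.Ici M)) (hfpos : ∀ u ≥ M, 0 < f u)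
    (hint : ∀ u ≥ M, IntegrableOn (fun s => 1 / f s) (Set.Ioi u))
    (hb : ∀ u ≥ M, deriv f u * (∫ s in Set.Ioi u, 1 / f s) ≤ Q) :
    ∀ u ≥ M, u ≤ M + f M * (∫ s in Set.Ioi M, 1 / f s) ^ Q / (Q - 1) *
      ((∫ s in Set.Ioi u, 1 / f s) ^ (1 - Q) - (∫ s in Set.Ioi M, 1 / f s) ^ (1 - Q)) := by
  set F : ℝ → ℝ := fun u => ∫ s in Ioi u, 1 / f s
  have hfc : ContinuousOn f (Ici M) := hf.continuousOn
  have hfd : ∀ x ∈ Ioi M, DifferentiableAt ℝ f x := fun x hx =>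
    (hf.differentiableOn one_ne_zero x (Ioi_subset_Ici_self hx)).differentiableAt (Ici_mem_nhds hx)
  have hFc : ContinuousOn F (Ici M) := (hint M le_rfl).continuousOn_Ici_primitive_Ioi
  have hFd : ∀ x ∈ Ioi M, HasDerivAt F (-(1 / f x)) x := fun x hx =>
    hasDerivAt_integral_Ioi (hint M le_rfl) hx
      (continuousAt_const.div (hfc.continuousAt (Ici_mem_nhds hx)) (hfpos x hx.le).ne')
  have hFpos : ∀ x ∈ Ici M, 0 < F x := fun x hx =>
    integral_Ioi_pos (hint x hx) fun s hs => one_div_pos.2 (hfpos s (le_trans hx hs.le))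
  have hanti := antitoneOn_mul_rpow_of_hasDerivAt hfc hfd hFc hFd (fun x hx => hfpos x hx.le)
    hFpos (fun x hx => hb x hx.le)
  intro u hu
  have hbound := sub_le_mul_rpow_sub_rpow_of_hasDerivAt hFc hFd (fun x hx => hfpos x hx.le) hFpos
    hQ.ne' (fun x hx => hanti self_mem_Ici (Ioi_subset_Ici_self hx) hx.le) hu
  linarith

theorem stmt7 (M Q : ℝ) (hM : 0 < M) (hQ : 1 < Q) (f : ℝ → ℝ)
    (hf : ContDiffOn ℝ 1 f (Set.Ici M)) (hfpos : ∀ u ≥ M, 0 < f u)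
    (hf' : ∀ u ≥ M, 0 < deriv f u)
    (hint : ∀ u ≥ M, IntegrableOn (fun s => 1 / f s) (Set.Ioi u))
    (hb : ∀ u ≥ M, deriv f u * (∫ s in Set.Ioi u, 1 / f s) ≤ Q) :
    ∀ u ≥ M, u ≤ M + f M * (∫ s in Set.Ioi M, 1 / f s) ^ Q / (Q - 1) *
      ((∫ s in Set.Ioi u, 1 / f s) ^ (1 - Q) - (∫ s in Set.Ioi M, 1 / f s) ^ (1 - Q)) :=
  stmt7_general M Q hQ f hf hfpos hint hb
end

section
/- Let $N>2$ and suppose $u$ is a positive $C^2$ radial solution of $u''+\frac{N-1}{r}u'+f(u)=0$ on $(0,\infty)$ such that the Pohozaev functional $P(r)=\frac12 r^N u'(r)^2 + r^N F_0(u(r)) + \frac{N-2}{2} r^{N-1} u(r)u'(r)$ satisfies $P(r)\to 0$ as $r\to 0^+$, and $Q(v):=vf(v)-(p_S+1)\int_0^v f \geq 0$ for $v\geq 0$ with $f>0$ on $(0,\infty)$. If $u(r_0)=0$ at some $r_0>0$ with $u'(r_0)<0$, then we reach a contradiction; hence $u(r)>0$ for all $r>0$. -/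
open Real Filter Set Topology MeasureTheory intervalIntegral

/-!
The Pohozaev functional satisfies `P' = r^(N-1) (N F₀(u) - (N-2)/2 u f(u))`, which is `≤ 0`
wherever `u ≥ 0`, by `Q ≥ 0`. If `u` had a first zero `r₀`, then `P` would decrease on `(0, r₀]`
from its limit `0` at `0⁺`, so `P(r₀) = r₀^N u'(r₀)^2 / 2 ≤ 0` forces `u'(r₀) = 0`. But
`(r^(N-1) u')' = -r^(N-1) f(u) < 0` on `(0, r₀)`, so `u' > 0` there and `u` increases to
`u(r₀) = 0`, contradicting `u > 0` before `r₀`.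
-/

theorem intervalIntegral.integral_comp_max_of_le {f : ℝ → ℝ} {a b : ℝ} (hab : a ≤ b) :
    ∫ s in a..b, f (max s a) = ∫ s in a..b, f s :=
  integral_congr fun s hs => by
    rw [uIcc_of_le hab] at hs
    rw [max_eq_left hs.1]

theorem mul_le_of_two_mul_div_sub_two_mul_le {N a b : ℝ} (hN : 2 < N)
    (h : 2 * N / (N - 2) * a ≤ b) : N * a ≤ (N - 2) / 2 * b := by
  rw [div_mul_eq_mul_div, div_le_iff₀ (by linarith)] at h
  linarith

theorem AntitoneOn.le_of_tendsto_nhdsGT {P : ℝ → ℝ} {a b L : ℝ}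
    (hP : AntitoneOn P (Ioc a b)) (hab : a < b) (hL : Tendsto P (𝓝[>] a) (𝓝 L)) : P b ≤ L :=
  ge_of_tendsto hL <| by
    filter_upwards [Ioo_mem_nhdsGT hab] with s hs
    exact hP ⟨hs.1, hs.2.le⟩ ⟨hab, le_rfl⟩ hs.2.le

theorem ContDiffOn.hasDerivAt_deriv {f : ℝ → ℝ} {s : Set ℝ} {n : WithTop ℕ∞} {x : ℝ}
    (hf : ContDiffOn ℝ n f s) (hs : IsOpen s) (hn : n ≠ 0) (hx : x ∈ s) :
    HasDerivAt f (deriv f x) x :=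
  ((hf.differentiableOn hn).differentiableAt (hs.mem_nhds hx)).hasDerivAt

theorem exists_first_zero_of_pos_near_zero {u : ℝ → ℝ} {ε r : ℝ} (hε : 0 < ε)
    (hu : ContinuousOn u (Ioi 0)) (hpos : ∀ s ∈ Ioo 0 ε, 0 < u s) (hr : 0 < r)
    (hur : u r ≤ 0) : ∃ r₀ > 0, u r₀ = 0 ∧ ∀ s ∈ Ioo 0 r₀, 0 < u s := by
  have hε2 : ε / 2 ∈ Ioo 0 ε := ⟨half_pos hε, half_lt_self hε⟩
  have hεr : ε ≤ r := not_lt.1 fun h => (hpos r ⟨hr, h⟩).not_ge hur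
  have huK : ContinuousOn u (Icc (ε / 2) r) := hu.mono fun s hs => hε2.1.trans_le hs.1
  set K := Icc (ε / 2) r ∩ u ⁻¹' Iic 0
  have hK : IsCompact K := isCompact_Icc.of_isClosed_subset
    (huK.preimage_isClosed_of_isClosed isClosed_Icc isClosed_Iic) inter_subset_left
  obtain ⟨r₀, ⟨⟨hr₀l, hr₀r⟩, hr₀u⟩, hr₀min⟩ :=
    hK.exists_isLeast ⟨r, ⟨hε2.2.le.trans hεr, le_rfl⟩, hur⟩
  have hr₀ : 0 < r₀ := hε2.1.trans_le hr₀l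
  have hpos₀ : ∀ s ∈ Ioo 0 r₀, 0 < u s := by
    intro s ⟨hs0, hsr₀⟩
    rcases lt_or_ge s ε with hsε | hεs
    · exact hpos s ⟨hs0, hsε⟩
    · by_contra! hus
      exact hsr₀.not_ge (hr₀min ⟨⟨hε2.2.le.trans hεs, hsr₀.le.trans hr₀r⟩, hus⟩)
  obtain ⟨c, ⟨hcl, hcr⟩, hc⟩ :=
    intermediate_value_Icc' hr₀l (huK.mono (Icc_subset_Icc_right hr₀r)) ⟨hr₀u, (hpos _ hε2).le⟩
  obtain rfl : c = r₀ := le_antisymm hcr (hr₀min ⟨⟨hcl, hcr.trans hr₀r⟩, hc.le⟩)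
  exact ⟨c, hr₀, hc, hpos₀⟩

noncomputable def pohozaev (N : ℕ) (F u : ℝ → ℝ) (r : ℝ) : ℝ :=
  1 / 2 * r ^ N * deriv u r ^ 2 + r ^ N * F (u r)
    + ((N : ℝ) - 2) / 2 * r ^ (N - 1) * u r * deriv u r

section RadialODE

variable {N : ℕ} {F g u : ℝ → ℝ} {x : ℝ}

theorem hasDerivAt_pohozaev (hN : 0 < N) (hx : x ≠ 0) (hF : HasDerivAt F (g (u x)) (u x))
    (hu : HasDerivAt u (deriv u x) x) (hu' : HasDerivAt (deriv u) (deriv (deriv u) x) x)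
    (hode : deriv (deriv u) x + ((N : ℝ) - 1) / x * deriv u x + g (u x) = 0) :
    HasDerivAt (pohozaev N F u)
      (x ^ (N - 1) * (N * F (u x) - ((N : ℝ) - 2) / 2 * (u x * g (u x)))) x := by
  have hu'' : deriv (deriv u) x = -(((N : ℝ) - 1) / x * deriv u x) - g (u x) := by linarith
  obtain ⟨n, rfl⟩ : ∃ n, N = n + 1 := ⟨N - 1, by omega⟩
  have h := ((((hasDerivAt_pow (n + 1) x).const_mul (1 / 2 : ℝ)).mul (hu'.pow 2)).add
    ((hasDerivAt_pow (n + 1) x).mul (hF.comp x hu))).add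
    ((((hasDerivAt_pow n x).const_mul ((((n + 1 : ℕ) : ℝ) - 2) / 2)).mul hu).mul hu')
  refine h.congr_deriv ?_
  simp only [Nat.add_sub_cancel, hu'', Pi.mul_apply, Pi.pow_apply, Function.comp_apply]
  rcases n with _ | n
  · field_simp
    ring
  · push_cast
    field_simp
    ring

theorem hasDerivAt_pow_mul_deriv (hN : 0 < N) (hx : x ≠ 0)
    (hu' : HasDerivAt (deriv u) (deriv (deriv u) x) x)
    (hode : deriv (deriv u) x + ((N : ℝ) - 1) / x * deriv u x + g (u x) = 0) :
    HasDerivAt (fun r => r ^ (N - 1) * deriv u r) (-(x ^ (N - 1) * g (u x))) x := by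
  have hu'' : deriv (deriv u) x = -(((N : ℝ) - 1) / x * deriv u x) - g (u x) := by linarith
  obtain ⟨n, rfl⟩ : ∃ n, N = n + 1 := ⟨N - 1, by omega⟩
  refine ((hasDerivAt_pow n x).mul hu').congr_deriv ?_
  simp only [Nat.add_sub_cancel, hu'']
  rcases n with _ | n
  · simp
  · push_cast
    field_simp
    ring

variable {R : ℝ} (hN : 0 < N) (hu : ContDiffOn ℝ 2 u (Ioi 0))
  (hode : ∀ x ∈ Ioo 0 R, deriv (deriv u) x + ((N : ℝ) - 1) / x * deriv u x + g (u x) = 0)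
include hN hu hode

theorem pohozaev_antitoneOn (hg : Continuous g)
    (hsign : ∀ x ∈ Ioo 0 R, N * ∫ s in (0:ℝ)..u x, g s ≤ ((N : ℝ) - 2) / 2 * (u x * g (u x))) :
    AntitoneOn (pohozaev N (fun v => ∫ s in (0:ℝ)..v, g s) u) (Ioc 0 R) := by
  have hsub : Ioc 0 R ⊆ Ioi 0 := fun x hx => hx.1
  have hd1 : ContDiffOn ℝ 1 (deriv u) (Ioi 0) := hu.deriv_of_isOpen isOpen_Ioi (by norm_num)
  refine antitoneOn_of_hasDerivWithinAt_nonpos (convex_Ioc 0 R)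
    (f' := fun x => x ^ (N - 1) *
      (N * (∫ s in (0:ℝ)..u x, g s) - ((N : ℝ) - 2) / 2 * (u x * g (u x))))
    ?_ (fun x hx => ?_) (fun x hx => ?_)
  · have huc := hu.continuousOn.mono hsub
    have hu'c := hd1.continuousOn.mono hsub
    unfold pohozaev
    fun_prop
  · rw [interior_Ioc] at hx
    exact (hasDerivAt_pohozaev hN hx.1.ne' ((hg.integral_hasStrictDerivAt 0 _).hasDerivAt)
      (hu.hasDerivAt_deriv isOpen_Ioi (by norm_num) hx.1)
      (hd1.hasDerivAt_deriv isOpen_Ioi (by norm_num) hx.1) (hode x hx)).hasDerivWithinAt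
  · rw [interior_Ioc] at hx
    exact mul_nonpos_of_nonneg_of_nonpos (pow_nonneg hx.1.le _) (sub_nonpos.2 (hsign x hx))

theorem strictMonoOn_Ioc_of_deriv_eq_zero (hg : ∀ x ∈ Ioo 0 R, 0 < g (u x))
    (hR : deriv u R = 0) : StrictMonoOn u (Ioc 0 R) := by
  have hsub : Ioc 0 R ⊆ Ioi 0 := fun x hx => hx.1
  have hd1 : ContDiffOn ℝ 1 (deriv u) (Ioi 0) := hu.deriv_of_isOpen isOpen_Ioi (by norm_num)
  have hflux : StrictAntiOn (fun r => r ^ (N - 1) * deriv u r) (Ioc 0 R) := by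
    refine strictAntiOn_of_hasDerivWithinAt_neg (convex_Ioc 0 R)
      (f' := fun x => -(x ^ (N - 1) * g (u x))) ?_ (fun x hx => ?_) (fun x hx => ?_)
    · exact (continuousOn_pow _).mul (hd1.continuousOn.mono hsub)
    · rw [interior_Ioc] at hx
      exact (hasDerivAt_pow_mul_deriv hN hx.1.ne'
        (hd1.hasDerivAt_deriv isOpen_Ioi (by norm_num) hx.1) (hode x hx)).hasDerivWithinAt
    · rw [interior_Ioc] at hx
      exact neg_neg_of_pos (mul_pos (pow_pos hx.1 _) (hg x hx))
  refine strictMonoOn_of_deriv_pos (convex_Ioc 0 R) (hu.continuousOn.mono hsub) fun x hx => ?_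
  rw [interior_Ioc] at hx
  have hlt : R ^ (N - 1) * deriv u R < x ^ (N - 1) * deriv u x :=
    hflux ⟨hx.1, hx.2.le⟩ ⟨hx.1.trans hx.2, le_rfl⟩ hx.2
  rw [hR, mul_zero] at hlt
  exact pos_of_mul_pos_right hlt (pow_nonneg hx.1.le _)

end RadialODE

theorem deriv_eq_zero_of_pohozaev_nonpos {N : ℕ} {F u : ℝ → ℝ} {r : ℝ} (hr : 0 < r)
    (hur : u r = 0) (hF : F 0 = 0) (hP : pohozaev N F u r ≤ 0) : deriv u r = 0 := by
  simp only [pohozaev, hur, hF, mul_zero, add_zero, zero_mul] at hP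
  by_contra h
  exact hP.not_gt (mul_pos (by positivity) (sq_pos_of_ne_zero h))

theorem stmt10_general (N : ℕ) (hN : 2 < N) (f : ℝ → ℝ)
    (hfc : ContinuousOn f (Set.Ici 0))
    (hfpos : ∀ v > (0:ℝ), 0 < f v)
    (hQ : ∀ v ≥ (0:ℝ),
      (2 * (N : ℝ) / ((N : ℝ) - 2)) * (∫ s in (0:ℝ)..v, f s) ≤ v * f v)
    (u : ℝ → ℝ) (hu2 : ContDiffOn ℝ 2 u (Set.Ioi 0))
    (hode : ∀ r > (0:ℝ),
      deriv (deriv u) r + ((N : ℝ) - 1) / r * deriv u r + f (u r) = 0)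
    (hpos0 : ∃ ε > (0:ℝ), ∀ r ∈ Set.Ioo 0 ε, 0 < u r)
    (hP : Tendsto (fun r : ℝ =>
        (1 / 2) * r ^ N * (deriv u r) ^ 2 + r ^ N * (∫ s in (0:ℝ)..(u r), f s)
          + ((N : ℝ) - 2) / 2 * r ^ (N - 1) * u r * deriv u r)
      (𝓝[>] 0) (𝓝 0)) :
    ∀ r > (0:ℝ), 0 < u r := by
  intro r hr
  by_contra! hur
  obtain ⟨ε, hε, hεpos⟩ := hpos0
  obtain ⟨r₀, hr₀, hu₀, hupos⟩ :=
    exists_first_zero_of_pos_near_zero hε hu2.continuousOn hεpos hr hur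
  -- `f` is extended continuously to `ℝ` so that its primitive is differentiable everywhere
  set g : ℝ → ℝ := fun v => f (max v 0)
  have hg : Continuous g := hfc.comp_continuous (by fun_prop) fun v => le_max_right v 0
  have hgf : ∀ v ≥ 0, g v = f v := fun v hv => congrArg f (max_eq_left hv)
  have hanti := pohozaev_antitoneOn (g := g) (by omega) hu2
    (fun x hx => hgf _ (hupos x hx).le ▸ hode x hx.1) hg fun x hx => by
      rw [hgf _ (hupos x hx).le, integral_comp_max_of_le (hupos x hx).le]
      exact mul_le_of_two_mul_div_sub_two_mul_le (by exact_mod_cast hN) (hQ _ (hupos x hx).le)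
  have hPg : Tendsto (pohozaev N (fun v => ∫ s in (0:ℝ)..v, g s) u) (𝓝[>] 0) (𝓝 0) := by
    refine hP.congr' ?_
    filter_upwards [Ioo_mem_nhdsGT hε] with s hs
    rw [pohozaev, integral_comp_max_of_le (hεpos s hs).le]
  have hdu₀ : deriv u r₀ = 0 := deriv_eq_zero_of_pohozaev_nonpos hr₀ hu₀ integral_same
    (hanti.le_of_tendsto_nhdsGT hr₀ hPg)
  have hmono := strictMonoOn_Ioc_of_deriv_eq_zero (by omega) hu2 (fun x hx => hode x hx.1)
    (fun x hx => hfpos _ (hupos x hx)) hdu₀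
  have hhalf : r₀ / 2 ∈ Ioo 0 r₀ := ⟨half_pos hr₀, half_lt_self hr₀⟩
  have := hmono ⟨hhalf.1, hhalf.2.le⟩ ⟨hr₀, le_rfl⟩ hhalf.2
  linarith [hupos _ hhalf]

theorem stmt10 (N : ℕ) (hN : 2 < N) (f : ℝ → ℝ)
    (hfc : ContinuousOn f (Set.Ici 0)) (hf0 : f 0 = 0)
    (hfpos : ∀ v > (0:ℝ), 0 < f v)
    (hQ : ∀ v ≥ (0:ℝ),
      (2 * (N : ℝ) / ((N : ℝ) - 2)) * (∫ s in (0:ℝ)..v, f s) ≤ v * f v)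
    (u : ℝ → ℝ) (hu2 : ContDiffOn ℝ 2 u (Set.Ioi 0))
    (hode : ∀ r > (0:ℝ),
      deriv (deriv u) r + ((N : ℝ) - 1) / r * deriv u r + f (u r) = 0)
    (hpos0 : ∃ ε > (0:ℝ), ∀ r ∈ Set.Ioo 0 ε, 0 < u r)
    (hP : Tendsto (fun r : ℝ =>
        (1 / 2) * r ^ N * (deriv u r) ^ 2 + r ^ N * (∫ s in (0:ℝ)..(u r), f s)
          + ((N : ℝ) - 2) / 2 * r ^ (N - 1) * u r * deriv u r)
      (𝓝[>] 0) (𝓝 0)) :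
    ∀ r > (0:ℝ), 0 < u r :=
  stmt10_general N hN f hfc hfpos hQ u hu2 hode hpos0 hP
end
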